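/- (Proposition 2, part 2) Let n = 3 and 0 < r_1 < r_2 < r_3 be pairwise distinct. Each of the three parades (α_1, α_2) ∈ {(π, 0), (0, π), (π, π)} (with α_3 = 0) is a critical point of L at which the Hessian matrix in the coordinates (α_1, α_2) has strictly negative determinant; hence each is a nondegenerate saddle of Morse index 1. -/

import Mathlib

open Real

/-- Length of the chordal segment between points at radii `r`, `r'` whose polar angles
differ by `θ`. -/
noncomputable def ell (r r' θ : ℝ) : ℝ :=
  Real.sqrt (r ^ 2 + r' ^ 2 - 2 * r * r' * Real.cos θ)

/-- The perimeter of the connecting cycle for three concentric circles of radii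
`r1, r2, r3`, as a function of the polar angles `a1, a2` of the first two vertices,
the third angle being fixed to `0`. -/
noncomputable def L3 (r1 r2 r3 : ℝ) (a1 a2 : ℝ) : ℝ :=
  ell r1 r2 (a2 - a1) + ell r2 r3 (0 - a2) + ell r3 r1 (a1 - 0)

/-- Partial derivative in the first variable. -/
noncomputable def pd1 (f : ℝ → ℝ → ℝ) (a b : ℝ) : ℝ := deriv (fun x => f x b) a

/-- Partial derivative in the second variable. -/
noncomputable def pd2 (f : ℝ → ℝ → ℝ) (a b : ℝ) : ℝ := deriv (fun y => f a y) b

/-- The Hessian matrix of `L3 r1 r2 r3` at `(a, b)` in the reduced coordinates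
`(α₁, α₂)`. -/
noncomputable def hess3 (r1 r2 r3 a b : ℝ) : Matrix (Fin 2) (Fin 2) ℝ :=
  !![pd1 (pd1 (L3 r1 r2 r3)) a b, pd1 (pd2 (L3 r1 r2 r3)) a b;
     pd2 (pd1 (L3 r1 r2 r3)) a b, pd2 (pd2 (L3 r1 r2 r3)) a b]

/-! At a parade every chord angle has `sin = 0`, so both partial derivatives vanish and the
Hessian is `!![A + C, -A; -A, A + B]`, where `A, B, C` are the values `r r' cos θ / ell r r' θ`
of the second derivatives of the three chord lengths; its determinant is `AB + AC + BC`.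
A folded chord (`cos θ = 1`) contributes `r r' / |r - r'| > min r r'`, an unfolded one
(`cos θ = -1`) contributes `-r r' / (r + r') ∈ (-min r r', 0)`. Each of the three parades
folds exactly one chord, and the smaller of its two radii is also a radius of one of the
unfolded chords, which forces `AB + AC + BC < 0`. -/

noncomputable def ellDeriv (r r' θ : ℝ) : ℝ := r * r' * sin θ / ell r r' θ

/-- Agrees with the second derivative of `ell r r'` only where `sin θ = 0`. -/
noncomputable def ellDeriv2 (r r' θ : ℝ) : ℝ := r * r' * cos θ / ell r r' θ

section Chord

variable {r r' : ℝ}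

lemma ell_radicand_pos (hr : 0 < r) (hr' : 0 < r') (hne : r ≠ r') (θ : ℝ) :
    0 < r ^ 2 + r' ^ 2 - 2 * r * r' * cos θ := by
  have : 0 < (r - r') ^ 2 := by positivity [sub_ne_zero.mpr hne]
  nlinarith [cos_le_one θ, mul_pos hr hr']

lemma ell_pos (hr : 0 < r) (hr' : 0 < r') (hne : r ≠ r') (θ : ℝ) : 0 < ell r r' θ :=
  sqrt_pos.mpr (ell_radicand_pos hr hr' hne θ)

lemma hasDerivAt_ell (hr : 0 < r) (hr' : 0 < r') (hne : r ≠ r') (θ : ℝ) :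
    HasDerivAt (ell r r') (ellDeriv r r' θ) θ := by
  have hrad : HasDerivAt (fun θ => r ^ 2 + r' ^ 2 - 2 * r * r' * cos θ)
      (2 * r * r' * sin θ) θ := by
    simpa using ((hasDerivAt_cos θ).const_mul (2 * r * r')).const_sub (r ^ 2 + r' ^ 2)
  refine ((hasDerivAt_sqrt (ell_radicand_pos hr hr' hne θ).ne').comp θ hrad).congr_deriv ?_
  have := (ell_pos hr hr' hne θ).ne'
  rw [ellDeriv]
  unfold ell at *
  field_simp

lemma hasDerivAt_ellDeriv_of_sin_eq_zero (hr : 0 < r) (hr' : 0 < r') (hne : r ≠ r') {θ : ℝ}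
    (hθ : sin θ = 0) : HasDerivAt (ellDeriv r r') (ellDeriv2 r r' θ) θ := by
  refine (((hasDerivAt_sin θ).const_mul (r * r')).div (hasDerivAt_ell hr hr' hne θ)
    (ell_pos hr hr' hne θ).ne').congr_deriv ?_
  have := (ell_pos hr hr' hne θ).ne'
  rw [ellDeriv2, hθ, mul_zero, zero_mul, sub_zero]
  field_simp

lemma ellDeriv_of_sin_eq_zero {θ : ℝ} (hθ : sin θ = 0) : ellDeriv r r' θ = 0 := by
  simp [ellDeriv, hθ]

lemma min_lt_ellDeriv2_of_cos_eq_one (hr : 0 < r) (hr' : 0 < r') (hne : r ≠ r') {θ : ℝ}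
    (hθ : cos θ = 1) : min r r' < ellDeriv2 r r' θ := by
  have hell : ell r r' θ = |r - r'| := by
    rw [ell, hθ, ← sqrt_sq_eq_abs]; ring_nf
  have habs : 0 < |r - r'| := abs_pos.mpr (sub_ne_zero.mpr hne)
  rw [ellDeriv2, hθ, hell, lt_div_iff₀ habs]
  rcases hne.lt_or_gt with h | h
  · rw [min_eq_left h.le, abs_of_neg (sub_neg.mpr h)]; nlinarith
  · rw [min_eq_right h.le, abs_of_pos (sub_pos.mpr h)]; nlinarith

lemma ellDeriv2_of_cos_eq_neg_one (hr : 0 < r) (hr' : 0 < r') {θ : ℝ} (hθ : cos θ = -1) :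
    ellDeriv2 r r' θ = -(r * r' / (r + r')) := by
  have hell : ell r r' θ = r + r' := by
    rw [ell, hθ, show r ^ 2 + r' ^ 2 - 2 * r * r' * -1 = (r + r') ^ 2 by ring]
    exact sqrt_sq (by positivity)
  rw [ellDeriv2, hθ, hell]; ring

lemma ellDeriv2_mem_Ioo_of_cos_eq_neg_one (hr : 0 < r) (hr' : 0 < r') {θ : ℝ}
    (hθ : cos θ = -1) : ellDeriv2 r r' θ ∈ Set.Ioo (-min r r') 0 := by
  rw [ellDeriv2_of_cos_eq_neg_one hr hr' hθ, Set.mem_Ioo, neg_lt_neg_iff, neg_neg_iff_pos,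
    lt_min_iff, div_lt_iff₀ (by positivity), div_lt_iff₀ (by positivity)]
  exact ⟨⟨by nlinarith, by nlinarith⟩, by positivity⟩

end Chord

lemma mul_add_mul_add_mul_neg_of_lt {x y z s t : ℝ} (hx : s < x) (hy : y ∈ Set.Ioo (-t) 0)
    (hz : z < 0) (hts : t ≤ s) : x * y + x * z + y * z < 0 := by
  obtain ⟨hsy, hy0⟩ := hy
  nlinarith [mul_neg_of_pos_of_neg (by linarith : 0 < x) hy0,
    mul_neg_of_neg_of_pos hz (by linarith : 0 < x + y)]

section Perimeter

variable {r1 r2 r3 : ℝ}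

lemma hasDerivAt_L3_fst (h1 : 0 < r1) (h2 : 0 < r2) (h3 : 0 < r3) (h12 : r1 ≠ r2)
    (h31 : r3 ≠ r1) (a b : ℝ) :
    HasDerivAt (fun t => L3 r1 r2 r3 t b)
      (-ellDeriv r1 r2 (b - a) + ellDeriv r3 r1 (a - 0)) a := by
  have h12' := (hasDerivAt_ell h1 h2 h12 (b - a)).comp a ((hasDerivAt_id' a).const_sub b)
  have h31' := (hasDerivAt_ell h3 h1 h31 (a - 0)).comp a ((hasDerivAt_id' a).sub_const 0)
  exact ((h12'.add_const (ell r2 r3 (0 - b))).add h31').congr_deriv (by ring)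

lemma hasDerivAt_L3_snd (h1 : 0 < r1) (h2 : 0 < r2) (h3 : 0 < r3) (h12 : r1 ≠ r2)
    (h23 : r2 ≠ r3) (a b : ℝ) :
    HasDerivAt (fun t => L3 r1 r2 r3 a t)
      (ellDeriv r1 r2 (b - a) - ellDeriv r2 r3 (0 - b)) b := by
  have h12' := (hasDerivAt_ell h1 h2 h12 (b - a)).comp b ((hasDerivAt_id' b).sub_const a)
  have h23' := (hasDerivAt_ell h2 h3 h23 (0 - b)).comp b ((hasDerivAt_id' b).const_sub 0)
  exact ((h12'.add h23').add_const (ell r3 r1 (a - 0))).congr_deriv (by ring)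

lemma pd1_L3 (h1 : 0 < r1) (h2 : 0 < r2) (h3 : 0 < r3) (h12 : r1 ≠ r2) (h31 : r3 ≠ r1) :
    pd1 (L3 r1 r2 r3) = fun a b => -ellDeriv r1 r2 (b - a) + ellDeriv r3 r1 (a - 0) :=
  funext₂ fun a b => (hasDerivAt_L3_fst h1 h2 h3 h12 h31 a b).deriv

lemma pd2_L3 (h1 : 0 < r1) (h2 : 0 < r2) (h3 : 0 < r3) (h12 : r1 ≠ r2) (h23 : r2 ≠ r3) :
    pd2 (L3 r1 r2 r3) = fun a b => ellDeriv r1 r2 (b - a) - ellDeriv r2 r3 (0 - b) :=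
  funext₂ fun a b => (hasDerivAt_L3_snd h1 h2 h3 h12 h23 a b).deriv

lemma hasDerivAt_L3_fst_zero_of_sin_eq_zero (h1 : 0 < r1) (h2 : 0 < r2) (h3 : 0 < r3)
    (h12 : r1 ≠ r2) (h31 : r3 ≠ r1) {a b : ℝ} (ha : sin a = 0) (hb : sin b = 0) :
    HasDerivAt (fun t => L3 r1 r2 r3 t b) 0 a := by
  convert hasDerivAt_L3_fst h1 h2 h3 h12 h31 a b
  simp [ellDeriv_of_sin_eq_zero, sin_sub, ha, hb]

lemma hasDerivAt_L3_snd_zero_of_sin_eq_zero (h1 : 0 < r1) (h2 : 0 < r2) (h3 : 0 < r3)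
    (h12 : r1 ≠ r2) (h23 : r2 ≠ r3) {a b : ℝ} (ha : sin a = 0) (hb : sin b = 0) :
    HasDerivAt (fun t => L3 r1 r2 r3 a t) 0 b := by
  convert hasDerivAt_L3_snd h1 h2 h3 h12 h23 a b
  simp [ellDeriv_of_sin_eq_zero, sin_sub, ha, hb]

lemma hess3_of_sin_eq_zero (h1 : 0 < r1) (h2 : 0 < r2) (h3 : 0 < r3) (h12 : r1 ≠ r2)
    (h23 : r2 ≠ r3) (h31 : r3 ≠ r1) {a b : ℝ} (ha : sin a = 0) (hb : sin b = 0) :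
    hess3 r1 r2 r3 a b =
      !![ellDeriv2 r1 r2 (b - a) + ellDeriv2 r3 r1 (a - 0), -ellDeriv2 r1 r2 (b - a);
        -ellDeriv2 r1 r2 (b - a), ellDeriv2 r1 r2 (b - a) + ellDeriv2 r2 r3 (0 - b)] := by
  have hD12 := hasDerivAt_ellDeriv_of_sin_eq_zero h1 h2 h12 (θ := b - a)
    (by simp [sin_sub, ha, hb])
  have hD23 := hasDerivAt_ellDeriv_of_sin_eq_zero h2 h3 h23 (θ := 0 - b) (by simp [hb])
  have hD31 := hasDerivAt_ellDeriv_of_sin_eq_zero h3 h1 h31 (θ := a - 0) (by simp [ha])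
  have h12_fst : HasDerivAt (fun x => ellDeriv r1 r2 (b - x)) (-ellDeriv2 r1 r2 (b - a)) a := by
    exact (hD12.comp a ((hasDerivAt_id' a).const_sub b)).congr_deriv (by ring)
  have h12_snd : HasDerivAt (fun y => ellDeriv r1 r2 (y - a)) (ellDeriv2 r1 r2 (b - a)) b := by
    exact (hD12.comp b ((hasDerivAt_id' b).sub_const a)).congr_deriv (by ring)
  have h23_snd : HasDerivAt (fun y => ellDeriv r2 r3 (0 - y)) (-ellDeriv2 r2 r3 (0 - b)) b := by
    exact (hD23.comp b ((hasDerivAt_id' b).const_sub 0)).congr_deriv (by ring)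
  have h31_fst : HasDerivAt (fun x => ellDeriv r3 r1 (x - 0)) (ellDeriv2 r3 r1 (a - 0)) a := by
    exact (hD31.comp a ((hasDerivAt_id' a).sub_const 0)).congr_deriv (by ring)
  rw [hess3, pd1_L3 h1 h2 h3 h12 h31, pd2_L3 h1 h2 h3 h12 h23]
  simp only [pd1, pd2]
  rw [(h12_fst.fun_neg.fun_add h31_fst).deriv, (h12_fst.sub_const _).deriv,
    (h12_snd.fun_neg.add_const _).deriv, (h12_snd.fun_sub h23_snd).deriv, neg_neg, sub_neg_eq_add]

lemma det_hess3_of_sin_eq_zero (h1 : 0 < r1) (h2 : 0 < r2) (h3 : 0 < r3) (h12 : r1 ≠ r2)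
    (h23 : r2 ≠ r3) (h31 : r3 ≠ r1) {a b : ℝ} (ha : sin a = 0) (hb : sin b = 0) :
    (hess3 r1 r2 r3 a b).det =
      ellDeriv2 r1 r2 (b - a) * ellDeriv2 r2 r3 (0 - b) +
        ellDeriv2 r1 r2 (b - a) * ellDeriv2 r3 r1 (a - 0) +
        ellDeriv2 r2 r3 (0 - b) * ellDeriv2 r3 r1 (a - 0) := by
  rw [hess3_of_sin_eq_zero h1 h2 h3 h12 h23 h31 ha hb, Matrix.det_fin_two_of]
  ring

end Perimeter

/-- Proposition 2, part 2: for `0 < r1 < r2 < r3` each of the three parades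
`(α₁, α₂) ∈ {(π, 0), (0, π), (π, π)}` (with `α₃ = 0`) is a critical point of the
perimeter at which the Hessian has strictly negative determinant, hence a nondegenerate
saddle of Morse index 1. -/
theorem stmt_7 (r1 r2 r3 : ℝ) (h1 : 0 < r1) (h12 : r1 < r2) (h23 : r2 < r3) :
    ∀ q ∈ ({(π, 0), (0, π), (π, π)} : Set (ℝ × ℝ)),
      HasDerivAt (fun t => L3 r1 r2 r3 t q.2) 0 q.1 ∧
      HasDerivAt (fun t => L3 r1 r2 r3 q.1 t) 0 q.2 ∧
      (hess3 r1 r2 r3 q.1 q.2).det < 0 := by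
  have h2 : 0 < r2 := h1.trans h12
  have h3 : 0 < r3 := h2.trans h23
  have h13 : r1 < r3 := h12.trans h23
  intro q hq
  have hsin : sin q.1 = 0 ∧ sin q.2 = 0 := by
    rcases hq with rfl | rfl | rfl <;> simp
  refine ⟨hasDerivAt_L3_fst_zero_of_sin_eq_zero h1 h2 h3 h12.ne h13.ne' hsin.1 hsin.2,
    hasDerivAt_L3_snd_zero_of_sin_eq_zero h1 h2 h3 h12.ne h23.ne hsin.1 hsin.2, ?_⟩
  rw [det_hess3_of_sin_eq_zero h1 h2 h3 h12.ne h23.ne h13.ne' hsin.1 hsin.2]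
  rcases hq with rfl | rfl | rfl
  · linarith [mul_add_mul_add_mul_neg_of_lt
      (min_lt_ellDeriv2_of_cos_eq_one h2 h3 h23.ne (θ := 0 - 0) (by simp))
      (ellDeriv2_mem_Ioo_of_cos_eq_neg_one h1 h2 (θ := 0 - π) (by simp))
      (ellDeriv2_mem_Ioo_of_cos_eq_neg_one h3 h1 (θ := π - 0) (by simp)).2
      (by simp [h12.le, h23.le])]
  · linarith [mul_add_mul_add_mul_neg_of_lt
      (min_lt_ellDeriv2_of_cos_eq_one h3 h1 h13.ne' (θ := 0 - 0) (by simp))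
      (ellDeriv2_mem_Ioo_of_cos_eq_neg_one h1 h2 (θ := π - 0) (by simp))
      (ellDeriv2_mem_Ioo_of_cos_eq_neg_one h2 h3 (θ := 0 - π) (by simp)).2
      (by simp [h13.le])]
  · linarith [mul_add_mul_add_mul_neg_of_lt
      (min_lt_ellDeriv2_of_cos_eq_one h1 h2 h12.ne (θ := π - π) (by simp))
      (ellDeriv2_mem_Ioo_of_cos_eq_neg_one h3 h1 (θ := π - 0) (by simp))
      (ellDeriv2_mem_Ioo_of_cos_eq_neg_one h2 h3 (θ := 0 - π) (by simp)).2
      (by simp [h12.le, h13.le])]
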